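/- In the hypersequent calculus with rules (ID), (COM), (∨l), (CUT) described below, if ⊢ Γ1, A ⇒ Δ1 and ⊢ Γ2, B ⇒ Δ2, then ⊢ (Γ1, A∨B ⇒ Δ1 | Γ2, A∨B ⇒ Δ2). -/
import Mathlib


/-- Formulas: propositional variables, binary connectives ⊙, →, ∧, ∨,
and constants ⊤, ⊥, t, f. -/
inductive Fml : Type
  | var : ℕ → Fml
  | odot : Fml → Fml → Fml
  | imp : Fml → Fml → Fml
  | conj : Fml → Fml → Fml
  | disj : Fml → Fml → Fml
  | top : Fml
  | bot : Fml
  | t : Fml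
  | f : Fml

/-- A sequent is a pair of finite multisets of formulas. -/
abbrev HSeq := Multiset Fml × Multiset Fml

/-- A hypersequent is a finite multiset of sequents. -/
abbrev Hyper := Multiset HSeq

/-- The hypersequent calculus with (ID), (COM), (∨l) and (CUT). -/
inductive Deriv : Hyper → Prop
  | id (A : Fml) : Deriv {({A}, {A})}
  | com {G1 G2 : Hyper} (Γ1 P1 S1 Δ1 Γ2 P2 S2 Δ2 : Multiset Fml) :
      Deriv (G1 + {(Γ1 + P1, S1 + Δ1)}) → Deriv (G2 + {(Γ2 + P2, S2 + Δ2)}) →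
      Deriv (G1 + G2 + {(Γ1 + Γ2, Δ1 + Δ2), (P1 + P2, S1 + S2)})
  | orl {G1 G2 : Hyper} (Γ Δ : Multiset Fml) (A B : Fml) :
      Deriv (G1 + {(A ::ₘ Γ, Δ)}) → Deriv (G2 + {(B ::ₘ Γ, Δ)}) →
      Deriv (G1 + G2 + {((Fml.disj A B) ::ₘ Γ, Δ)})
  | cut {G1 G2 : Hyper} (Γ1 Δ1 Γ2 Δ2 : Multiset Fml) (A : Fml) :
      Deriv (G1 + {(A ::ₘ Γ1, Δ1)}) → Deriv (G2 + {(Γ2, A ::ₘ Δ2)}) →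
      Deriv (G1 + G2 + {(Γ1 + Γ2, Δ1 + Δ2)})

theorem dcast {G G' : Hyper} (e : G = G') (h : Deriv G) : Deriv G' := e ▸ h

/-- Lemma 4.1(ii): from ⊢ Γ1, A ⇒ Δ1 and ⊢ Γ2, B ⇒ Δ2 derive
⊢ Γ1, A∨B ⇒ Δ1 | Γ2, A∨B ⇒ Δ2. -/
theorem stmt_12 (Γ1 Δ1 Γ2 Δ2 : Multiset Fml) (A B : Fml)
    (h1 : Deriv {(A ::ₘ Γ1, Δ1)}) (h2 : Deriv {(B ::ₘ Γ2, Δ2)}) :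
    Deriv {((Fml.disj A B) ::ₘ Γ1, Δ1), ((Fml.disj A B) ::ₘ Γ2, Δ2)} := by
  -- d1 : A ⇒ B | B ⇒ A
  have d1 : Deriv {(({A} : Multiset Fml), ({B} : Multiset Fml)), ({B}, {A})} := by
    have := Deriv.com (G1 := 0) (G2 := 0) {A} 0 {A} 0 0 {B} 0 {B}
      (dcast (by simp) (Deriv.id A)) (dcast (by simp) (Deriv.id B))
    exact dcast (by simp) this
  -- d2 : A ⇒ B | A∨B ⇒ A
  have d2 : Deriv {(({A} : Multiset Fml), ({B} : Multiset Fml)),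
      ({Fml.disj A B}, {A})} := by
    have := Deriv.orl (G1 := 0) (G2 := {({A}, {B})}) 0 {A} A B
      (dcast (by simp) (Deriv.id A)) (dcast (by simp) d1)
    exact dcast (by simp) this
  -- d3 : A ⇒ B | A∨B, Γ1 ⇒ Δ1
  have d3 : Deriv {(({A} : Multiset Fml), ({B} : Multiset Fml)),
      ((Fml.disj A B) ::ₘ Γ1, Δ1)} := by
    have := Deriv.cut (G1 := 0) (G2 := {({A}, {B})}) Γ1 Δ1 {Fml.disj A B} 0 A
      (dcast (by simp) h1) (dcast (by simp) d2)
    exact dcast (by rw [add_comm Γ1, Multiset.singleton_add]; simp) this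
  -- d4 : A∨B, Γ1 ⇒ Δ1 | A, Γ2 ⇒ Δ2
  have d4 : Deriv {((Fml.disj A B) ::ₘ Γ1, Δ1), (A ::ₘ Γ2, Δ2)} := by
    have := Deriv.cut (G1 := 0) (G2 := {((Fml.disj A B) ::ₘ Γ1, Δ1)}) Γ2 Δ2 {A} 0 B
      (dcast (by simp) h2) (dcast (Multiset.pair_comm _ _) d3)
    exact dcast (by rw [add_comm Γ2, Multiset.singleton_add]; simp) this
  -- final ∨l
  have := Deriv.orl (G1 := {((Fml.disj A B) ::ₘ Γ1, Δ1)}) (G2 := 0) Γ2 Δ2 A B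
    (dcast (by simp) d4) (dcast (by simp) h2)
  exact dcast (by simp) this
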